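/- For every p in (1,\infty) there exists a constant c = c(p) > 0 such that for all real numbers w and k, c^{-1}(|w|+|k|)^{p-2}(w-k)_\pm^2 \leq G_\pm(w,k) \leq c(|w|+|k|)^{p-2}(w-k)_\pm^2, where G_\pm(w,k) = \pm(p-1)\int_k^w |s|^{p-2}(s-k)_\pm\,ds. -/

import Mathlib

/-- `G₊(w,k) = (p-1) ∫_k^w |s|^{p-2} (s-k)₊ ds`. -/
noncomputable def Gplus (p w k : ℝ) : ℝ :=
  (p - 1) * ∫ s in k..w, |s| ^ (p - 2) * max (s - k) 0

/-- `G₋(w,k) = -(p-1) ∫_k^w |s|^{p-2} (s-k)₋ ds`. -/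
noncomputable def Gminus (p w k : ℝ) : ℝ :=
  -((p - 1) * ∫ s in k..w, |s| ^ (p - 2) * max (k - s) 0)

/-!
Write `m = |w| + |k|` and `d = w - k > 0`, so that `d ≤ m` and
`G₊(w,k) = (p-1) ∫_k^w |s|^{p-2}(s-k) ds`. On `[k, w]` we have `|s| ≤ m` and `m - d ≤ 2|s|`,
and either `w ≥ m/2` or `k ≤ -m/2`.

*Lower bound.* In either case there is a subinterval of `[k, w]` of length `d/8` on which
`s - k ≥ d/8` and `m/4 ≤ |s| ≤ m`; there `|s|^{p-2}` is comparable to `m^{p-2}` whatever the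
sign of `p - 2`.

*Upper bound.* If `2d ≤ m`, then `m/4 ≤ |s| ≤ m` on all of `[k, w]` and the same comparison
applies. If `m ≤ 2d`, bound `s - k` by `d` and `∫_k^w |s|^{p-2}` by
`∫_{-m}^m |s|^{p-2} = 2m^{p-1}/(p-1) ≤ 4 d m^{p-2}/(p-1)`; this absorbs the singularity of
`|s|^{p-2}` at `0` when `p < 2`.

`G₋(w,k) = G₊(-w,-k)` reduces the second pair of inequalities to the first.
-/

open MeasureTheory intervalIntegral Set

section RpowOnInterval

variable {a b m x : ℝ}

lemma min_rpow_le_rpow_of_mem_Icc (ha : 0 < a) (hx : x ∈ Icc a b) (r : ℝ) :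
    min (a ^ r) (b ^ r) ≤ x ^ r := by
  rcases le_total 0 r with hr | hr
  · exact min_le_of_left_le (Real.rpow_le_rpow ha.le hx.1 hr)
  · exact min_le_of_right_le (Real.rpow_le_rpow_of_nonpos (ha.trans_le hx.1) hx.2 hr)

lemma rpow_le_max_rpow_of_mem_Icc (ha : 0 < a) (hx : x ∈ Icc a b) (r : ℝ) :
    x ^ r ≤ max (a ^ r) (b ^ r) := by
  rcases le_total 0 r with hr | hr
  · exact le_max_of_le_right (Real.rpow_le_rpow (ha.le.trans hx.1) hx.2 hr)
  · exact le_max_of_le_left (Real.rpow_le_rpow_of_nonpos ha hx.1 hr)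

lemma div_four_rpow (hm : 0 ≤ m) (r : ℝ) : (m / 4) ^ r = (4 : ℝ)⁻¹ ^ r * m ^ r := by
  rw [div_eq_inv_mul, Real.mul_rpow (by norm_num) hm]

lemma min_mul_rpow_le_rpow (hm : 0 < m) (hx : x ∈ Icc (m / 4) m) (r : ℝ) :
    min ((4 : ℝ)⁻¹ ^ r) 1 * m ^ r ≤ x ^ r := by
  rw [min_mul_of_nonneg _ _ (Real.rpow_nonneg hm.le r), one_mul, ← div_four_rpow hm.le]
  exact min_rpow_le_rpow_of_mem_Icc (by positivity) hx r

lemma rpow_le_max_mul_rpow (hm : 0 < m) (hx : x ∈ Icc (m / 4) m) (r : ℝ) :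
    x ^ r ≤ max ((4 : ℝ)⁻¹ ^ r) 1 * m ^ r := by
  rw [max_mul_of_nonneg _ _ (Real.rpow_nonneg hm.le r), one_mul, ← div_four_rpow hm.le]
  exact rpow_le_max_rpow_of_mem_Icc (by positivity) hx r

end RpowOnInterval

section PointsOfInterval

variable {k w s : ℝ}

lemma sub_le_abs_add_abs (k w : ℝ) : w - k ≤ |w| + |k| :=
  (le_abs_self _).trans (abs_sub w k)

lemma abs_le_abs_add_abs_of_mem_Icc (hs : s ∈ Icc k w) : |s| ≤ |w| + |k| :=
  abs_le.2 ⟨by linarith [neg_abs_le k, abs_nonneg w, hs.1],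
    by linarith [le_abs_self w, abs_nonneg k, hs.2]⟩

lemma abs_add_abs_sub_le_two_mul_abs (hs : s ∈ Icc k w) : |w| + |k| - (w - k) ≤ 2 * |s| := by
  have hw := abs_sub_abs_le_abs_sub w s
  have hk := abs_sub_abs_le_abs_sub k s
  rw [abs_of_nonneg (sub_nonneg.2 hs.2)] at hw
  rw [abs_sub_comm, abs_of_nonneg (sub_nonneg.2 hs.1)] at hk
  linarith

lemma half_le_or_le_neg_half (hkw : k ≤ w) :
    (|w| + |k|) / 2 ≤ w ∨ k ≤ -((|w| + |k|) / 2) := by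
  by_contra! h
  have hw := abs_lt.2 ⟨h.2.trans_le hkw, h.1⟩
  have hk := abs_lt.2 ⟨h.2, hkw.trans_lt h.1⟩
  linarith

end PointsOfInterval

section Integrals

variable {r k w : ℝ}

lemma intervalIntegrable_abs_rpow (hr : -1 < r) (a b : ℝ) :
    IntervalIntegrable (fun x : ℝ => |x| ^ r) volume a b := by
  have hpos : ∀ c, 0 ≤ c → IntervalIntegrable (fun x : ℝ => |x| ^ r) volume 0 c :=
    fun c hc => (intervalIntegrable_rpow' hr).congr fun x hx => by
      rw [uIoc_of_le hc] at hx
      simp only [abs_of_pos hx.1]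
  have h0 : ∀ c, IntervalIntegrable (fun x : ℝ => |x| ^ r) volume 0 c := fun c => by
    rcases le_total 0 c with hc | hc
    · exact hpos c hc
    · rw [IntervalIntegrable.iff_comp_neg]
      simpa using hpos (-c) (neg_nonneg.2 hc)
  exact (h0 a).symm.trans (h0 b)

lemma integral_abs_rpow_neg_self (hr : -1 < r) {m : ℝ} (hm : 0 ≤ m) :
    ∫ x in -m..m, |x| ^ r = 2 * (m ^ (r + 1) / (r + 1)) := by
  have hright : ∫ x in (0 : ℝ)..m, |x| ^ r = m ^ (r + 1) / (r + 1) := by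
    have hcongr : EqOn (fun x : ℝ => |x| ^ r) (fun x => x ^ r) (uIcc 0 m) := fun x hx => by
      rw [uIcc_of_le hm] at hx
      simp only [abs_of_nonneg hx.1]
    rw [integral_congr hcongr, integral_rpow (Or.inl hr), Real.zero_rpow (by linarith), sub_zero]
  have hleft : ∫ x in -m..0, |x| ^ r = ∫ x in (0 : ℝ)..m, |x| ^ r := by
    simpa using (integral_comp_neg (a := 0) (b := m) fun x : ℝ => |x| ^ r).symm
  rw [← integral_add_adjacent_intervals (intervalIntegrable_abs_rpow hr _ _)
    (intervalIntegrable_abs_rpow hr _ _), hleft, hright, two_mul]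

lemma intervalIntegrable_abs_rpow_mul_max (hr : -1 < r) (k a b : ℝ) :
    IntervalIntegrable (fun s : ℝ => |s| ^ r * max (s - k) 0) volume a b :=
  (intervalIntegrable_abs_rpow hr a b).mul_continuousOn (by fun_prop)

lemma mul_sub_le_integral_of_le_on {f : ℝ → ℝ} {a b c : ℝ} (hka : k ≤ a) (hab : a ≤ b)
    (hbw : b ≤ w) (hf : IntervalIntegrable f volume k w) (hf0 : ∀ s, 0 ≤ f s)
    (hc : ∀ s ∈ Icc a b, c ≤ f s) :
    c * (b - a) ≤ ∫ s in k..w, f s := by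
  have hab_int := integral_mono_on hab intervalIntegrable_const (hf.mono_set ?_) hc
  · rw [intervalIntegral.integral_const, smul_eq_mul, mul_comm] at hab_int
    exact hab_int.trans
      (integral_mono_interval hka hab hbw (Filter.Eventually.of_forall hf0) hf)
  · rw [uIcc_of_le (hka.trans (hab.trans hbw)), uIcc_of_le hab]
    exact Icc_subset_Icc hka hbw

lemma integral_le_mul_sub_of_le_on {f : ℝ → ℝ} {c : ℝ} (hkw : k ≤ w)
    (hf : IntervalIntegrable f volume k w) (hc : ∀ s ∈ Icc k w, f s ≤ c) :
    ∫ s in k..w, f s ≤ c * (w - k) := by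
  have := integral_mono_on hkw hf intervalIntegrable_const hc
  rwa [intervalIntegral.integral_const, smul_eq_mul, mul_comm] at this

lemma le_integral_abs_rpow_mul_max (hr : -1 < r) (hkw : k < w) :
    min ((4 : ℝ)⁻¹ ^ r) 1 / 64 * ((|w| + |k|) ^ r * (w - k) ^ 2)
      ≤ ∫ s in k..w, |s| ^ r * max (s - k) 0 := by
  set m := |w| + |k|
  set d := w - k
  have hd : 0 < d := sub_pos.2 hkw
  have hdm : d ≤ m := sub_le_abs_add_abs k w
  obtain ⟨a, hka, haw, habs⟩ : ∃ a, k + d / 8 ≤ a ∧ a + d / 8 ≤ w ∧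
      ∀ s ∈ Icc a (a + d / 8), m / 4 ≤ |s| := by
    rcases half_le_or_le_neg_half hkw.le with h | h
    · exact ⟨w - d / 8, by linarith, by linarith,
        fun s hs => by linarith [hs.1, le_abs_self s]⟩
    · exact ⟨k + d / 8, le_rfl, by linarith, fun s hs => by linarith [hs.2, neg_abs_le s]⟩
  have hbound : ∀ s ∈ Icc a (a + d / 8),
      min ((4 : ℝ)⁻¹ ^ r) 1 * m ^ r * (d / 8) ≤ |s| ^ r * max (s - k) 0 := fun s hs =>
    mul_le_mul
      (min_mul_rpow_le_rpow (hd.trans_le hdm)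
        ⟨habs s hs, abs_le_abs_add_abs_of_mem_Icc ⟨by linarith [hs.1], by linarith [hs.2]⟩⟩
        r)
      (le_max_of_le_left (by linarith [hs.1])) (by positivity) (by positivity)
  calc min ((4 : ℝ)⁻¹ ^ r) 1 / 64 * (m ^ r * d ^ 2)
      = min ((4 : ℝ)⁻¹ ^ r) 1 * m ^ r * (d / 8) * (a + d / 8 - a) := by ring
    _ ≤ _ := mul_sub_le_integral_of_le_on (by linarith) (by linarith) haw
        (intervalIntegrable_abs_rpow_mul_max hr k k w) (fun s => by positivity) hbound

lemma integral_abs_rpow_mul_max_le_of_two_mul_le (hr : -1 < r) (hkw : k < w)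
    (h : 2 * (w - k) ≤ |w| + |k|) :
    ∫ s in k..w, |s| ^ r * max (s - k) 0
      ≤ max ((4 : ℝ)⁻¹ ^ r) 1 * ((|w| + |k|) ^ r * (w - k) ^ 2) := by
  set m := |w| + |k|
  set d := w - k
  have hd : 0 < d := sub_pos.2 hkw
  have hm : 0 < m := hd.trans_le (sub_le_abs_add_abs k w)
  have hbound :
      ∀ s ∈ Icc k w, |s| ^ r * max (s - k) 0 ≤ max ((4 : ℝ)⁻¹ ^ r) 1 * m ^ r * d :=
    fun s hs => mul_le_mul
      (rpow_le_max_mul_rpow hm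
        ⟨by linarith [abs_add_abs_sub_le_two_mul_abs hs], abs_le_abs_add_abs_of_mem_Icc hs⟩ r)
      (max_le (by linarith [hs.2]) hd.le) (by positivity) (by positivity)
  calc ∫ s in k..w, |s| ^ r * max (s - k) 0
      ≤ max ((4 : ℝ)⁻¹ ^ r) 1 * m ^ r * d * d :=
        integral_le_mul_sub_of_le_on hkw.le (intervalIntegrable_abs_rpow_mul_max hr k k w) hbound
    _ = _ := by ring

lemma integral_abs_rpow_mul_max_le_of_le_two_mul (hr : -1 < r) (hkw : k < w)
    (h : |w| + |k| ≤ 2 * (w - k)) :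
    ∫ s in k..w, |s| ^ r * max (s - k) 0 ≤ 4 / (r + 1) * ((|w| + |k|) ^ r * (w - k) ^ 2) := by
  set m := |w| + |k|
  set d := w - k
  have hd : 0 < d := sub_pos.2 hkw
  have hm : 0 < m := hd.trans_le (sub_le_abs_add_abs k w)
  have hr1 : 0 < r + 1 := by linarith
  calc ∫ s in k..w, |s| ^ r * max (s - k) 0
      ≤ ∫ s in k..w, |s| ^ r * d :=
        integral_mono_on hkw.le (intervalIntegrable_abs_rpow_mul_max hr k k w)
          ((intervalIntegrable_abs_rpow hr k w).mul_const d) fun s hs =>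
            mul_le_mul_of_nonneg_left (max_le (by linarith [hs.2]) hd.le) (by positivity)
    _ = d * ∫ s in k..w, |s| ^ r := by rw [intervalIntegral.integral_mul_const, mul_comm]
    _ ≤ d * ∫ s in -m..m, |s| ^ r :=
        mul_le_mul_of_nonneg_left
          (integral_mono_interval (by linarith [neg_abs_le k, abs_nonneg w]) hkw.le
            (by linarith [le_abs_self w, abs_nonneg k])
            (Filter.Eventually.of_forall fun s => by positivity)
            (intervalIntegrable_abs_rpow hr _ _))
          hd.le
    _ = 2 * d * m ^ r / (r + 1) * m := by
        rw [integral_abs_rpow_neg_self hr hm.le, Real.rpow_add_one hm.ne']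
        ring
    _ ≤ 2 * d * m ^ r / (r + 1) * (2 * d) := mul_le_mul_of_nonneg_left h (by positivity)
    _ = _ := by ring

lemma integral_abs_rpow_mul_max_le (hr : -1 < r) (hkw : k < w) :
    ∫ s in k..w, |s| ^ r * max (s - k) 0
      ≤ max (max ((4 : ℝ)⁻¹ ^ r) 1) (4 / (r + 1)) * ((|w| + |k|) ^ r * (w - k) ^ 2) := by
  have hX : 0 ≤ (|w| + |k|) ^ r * (w - k) ^ 2 := by positivity
  rcases le_total (2 * (w - k)) (|w| + |k|) with h | h
  · exact (integral_abs_rpow_mul_max_le_of_two_mul_le hr hkw h).trans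
      (mul_le_mul_of_nonneg_right (le_max_left _ _) hX)
  · exact (integral_abs_rpow_mul_max_le_of_le_two_mul hr hkw h).trans
      (mul_le_mul_of_nonneg_right (le_max_right _ _) hX)

end Integrals

lemma Gminus_eq_Gplus_neg (p w k : ℝ) : Gminus p w k = Gplus p (-w) (-k) := by
  have h := integral_comp_neg (a := w) (b := k) fun s => |s| ^ (p - 2) * max (s - -k) 0
  simp only [abs_neg, neg_sub_neg] at h
  rw [Gplus, Gminus, ← h, integral_symm]
  ring

section Gpm

variable {p : ℝ}

lemma Gplus_eq_zero_of_le {w k : ℝ} (h : w ≤ k) : Gplus p w k = 0 := by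
  have hzero : EqOn (fun s => |s| ^ (p - 2) * max (s - k) 0) 0 (uIcc k w) := fun s hs => by
    rw [uIcc_of_ge h] at hs
    simp [max_eq_right (sub_nonpos.2 hs.2)]
  rw [Gplus, integral_congr hzero]
  simp

lemma le_Gplus (hp : 1 < p) (w k : ℝ) :
    (p - 1) * (min ((4 : ℝ)⁻¹ ^ (p - 2)) 1 / 64)
        * ((|w| + |k|) ^ (p - 2) * max (w - k) 0 ^ 2) ≤ Gplus p w k := by
  rcases le_or_gt w k with h | h
  · rw [Gplus_eq_zero_of_le h, max_eq_right (sub_nonpos.2 h)]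
    simp
  · rw [max_eq_left (sub_pos.2 h).le, mul_assoc, Gplus]
    exact mul_le_mul_of_nonneg_left (le_integral_abs_rpow_mul_max (by linarith) h) (by linarith)

lemma Gplus_le (hp : 1 < p) (w k : ℝ) :
    Gplus p w k ≤ (p - 1) * max (max ((4 : ℝ)⁻¹ ^ (p - 2)) 1) (4 / (p - 1))
        * ((|w| + |k|) ^ (p - 2) * max (w - k) 0 ^ 2) := by
  rcases le_or_gt w k with h | h
  · rw [Gplus_eq_zero_of_le h, max_eq_right (sub_nonpos.2 h)]
    simp
  · have hr := integral_abs_rpow_mul_max_le (r := p - 2) (by linarith) h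
    rw [show p - 2 + 1 = p - 1 by ring] at hr
    rw [max_eq_left (sub_pos.2 h).le, mul_assoc, Gplus]
    exact mul_le_mul_of_nonneg_left hr (by linarith)

lemma Gplus_comparison (hp : 1 < p) :
    ∃ c > (0 : ℝ), ∀ w k : ℝ,
      c⁻¹ * ((|w| + |k|) ^ (p - 2) * max (w - k) 0 ^ 2) ≤ Gplus p w k ∧
      Gplus p w k ≤ c * ((|w| + |k|) ^ (p - 2) * max (w - k) 0 ^ 2) := by
  set A := (p - 1) * (min ((4 : ℝ)⁻¹ ^ (p - 2)) 1 / 64)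
  set B := (p - 1) * max (max ((4 : ℝ)⁻¹ ^ (p - 2)) 1) (4 / (p - 1))
  have hp1 : 0 < p - 1 := by linarith
  have hA : 0 < A := by positivity
  have hB : 0 < B := by positivity
  refine ⟨max B A⁻¹, by positivity, fun w k => ⟨?_, ?_⟩⟩
  all_goals have hX : 0 ≤ (|w| + |k|) ^ (p - 2) * max (w - k) 0 ^ 2 := by positivity
  · exact (mul_le_mul_of_nonneg_right (inv_le_of_inv_le₀ hA (le_max_right _ _)) hX).trans
      (le_Gplus hp w k)
  · exact (Gplus_le hp w k).trans (mul_le_mul_of_nonneg_right (le_max_left _ _) hX)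

end Gpm

/-- two-sided comparison of `G±(w,k)` with `(|w|+|k|)^{p-2}(w-k)±²`. -/
theorem Gpm_comparison (p : ℝ) (hp : 1 < p) :
    ∃ c > (0:ℝ), ∀ w k : ℝ,
      c⁻¹ * ((|w| + |k|) ^ (p - 2) * max (w - k) 0 ^ 2) ≤ Gplus p w k ∧
      Gplus p w k ≤ c * ((|w| + |k|) ^ (p - 2) * max (w - k) 0 ^ 2) ∧
      c⁻¹ * ((|w| + |k|) ^ (p - 2) * max (k - w) 0 ^ 2) ≤ Gminus p w k ∧
      Gminus p w k ≤ c * ((|w| + |k|) ^ (p - 2) * max (k - w) 0 ^ 2) := by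
  obtain ⟨c, hc, hG⟩ := Gplus_comparison hp
  refine ⟨c, hc, fun w k => ?_⟩
  have hneg := hG (-w) (-k)
  rw [abs_neg, abs_neg, neg_sub_neg, ← Gminus_eq_Gplus_neg] at hneg
  exact ⟨(hG w k).1, (hG w k).2, hneg.1, hneg.2⟩
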